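/- arXiv:1304.5377 — 2 statements merged into one kernel-verified Lean document; each statement's English description precedes it below -/
import Mathlib

section
/- Let X be a complex Banach space and f : ℂ → X a holomorphic (entire) function. For all nonnegative reals R₁, R₂, R with R₁ + R₂ ≤ R, we have ∫_𝕋 ∫_𝕋 ‖f(R₁ z₁ + R₂ z₂)‖ dz₁ dz₂ ≤ ∫_𝕋 ‖f(R z)‖ dz, where 𝕋 is the unit circle with normalized Lebesgue (Haar) measure. -/
open MeasureTheory Filter Finset
open scoped BigOperators ENNReal NNReal Topology

noncomputable instance : MeasurableSpace Circle := borel Circle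
instance : BorelSpace Circle := ⟨rfl⟩

/-- Normalized Haar (probability) measure on the circle group `𝕋`. -/
noncomputable def circleHaar : Measure Circle :=
  ((Measure.haar : Measure Circle) Set.univ)⁻¹ • Measure.haar

/-- Normalized Haar measure on the polytorus `𝕋^N`. -/
noncomputable def torusHaar (N : ℕ) : Measure (Fin N → Circle) :=
  Measure.pi fun _ => circleHaar

/-!
Rotating the inner variable by `z₁` and swapping the integrals turns the left side into
`∫ z₂, M (R₁ + R₂ z₂)`, where `M c = ∫ ‖f (c z)‖ dz`, so it suffices that `M c ≤ M R` for
`‖c‖ ≤ R`. Up to `ε`, `M c = ‖∫ T z (f (c z)) dz‖` for a measurable family of functionals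
`T z` of norm at most `1` (norming functionals of a simple `L¹`-approximation of
`z ↦ f (c z)`). The function `ζ ↦ ∫ T z (f (ζ z)) dz` is entire and bounded on `‖ζ‖ = R` by
`M ζ = M R` (rotation invariance), so the maximum modulus principle gives `M c ≤ M R + ε`.
-/

instance : circleHaar.IsMulLeftInvariant := by
  unfold circleHaar; infer_instance

instance : IsProbabilityMeasure circleHaar := by
  constructor
  rw [circleHaar, Measure.smul_apply, smul_eq_mul]
  exact ENNReal.inv_mul_cancel (NeZero.ne _) (measure_ne_top _ _)

section Rotation

variable {E : Type*} [NormedAddCommGroup E] [NormedSpace ℝ E]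
  (μ : Measure Circle) [μ.IsMulLeftInvariant]

lemma integral_comp_mul_eq_comp_norm_mul (g : ℂ → E) (ζ : ℂ) :
    ∫ z : Circle, g (ζ * z) ∂μ = ∫ z : Circle, g (‖ζ‖ * z) ∂μ := by
  have h : ∀ z : Circle, ζ * z = ‖ζ‖ * ((Circle.exp (Complex.arg ζ) * z : Circle) : ℂ) := by
    intro z
    rw [Circle.coe_mul, Circle.coe_exp, ← mul_assoc, Complex.norm_mul_exp_arg_mul_I]
  simp_rw [h]
  exact integral_mul_left_eq_self (fun z : Circle => g (‖ζ‖ * z)) _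

end Rotation

section NormingFunctionals

variable {α 𝕜 X : Type*} [MeasurableSpace α] {μ : Measure α} [RCLike 𝕜]
  [NormedAddCommGroup X] [NormedSpace 𝕜 X]

lemma Integrable.exists_simpleFunc_dual_integral_norm_le {g : α → X} (hg : Integrable g μ)
    {ε : ℝ} (hε : 0 < ε) :
    ∃ T : SimpleFunc α (StrongDual 𝕜 X), (∀ z, ‖T z‖ ≤ 1) ∧
      ∫ z, ‖g z‖ ∂μ ≤ ‖∫ z, T z (g z) ∂μ‖ + ε := by
  obtain ⟨s, hs, hs_int⟩ := (memLp_one_iff_integrable.2 hg).exists_simpleFunc_eLpNorm_sub_lt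
    ENNReal.one_ne_top (ε := ENNReal.ofReal (ε / 2)) (by positivity)
  have hgs : Integrable (fun z => g z - s z) μ := hg.sub (memLp_one_iff_integrable.1 hs_int)
  have hgs_le : ∫ z, ‖g z - s z‖ ∂μ ≤ ε / 2 := by
    rw [← ENNReal.ofReal_le_ofReal_iff (by positivity),
      ofReal_integral_norm_eq_lintegral_enorm hgs, ← eLpNorm_one_eq_lintegral_enorm]
    exact hs.le
  choose φ hφ_norm hφ_apply using fun x : X => exists_dual_vector'' (𝕜 := 𝕜) x
  set T := s.map φ
  have hT_norm : ∀ z, ‖T z‖ ≤ 1 := fun z => hφ_norm _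
  have hTg : Integrable (fun z => T z (g z)) μ :=
    hg.norm.mono' (isBoundedBilinearMap_apply.continuous.comp_aestronglyMeasurable₂
      T.aestronglyMeasurable hg.aestronglyMeasurable)
      (ae_of_all _ fun z => (T z).le_of_opNorm_le (hT_norm z) _ |>.trans_eq (one_mul _))
  have pointwise : ∀ z, ‖g z‖ ≤ RCLike.re (T z (g z)) + 2 * ‖g z - s z‖ := by
    intro z
    have h_split : RCLike.re (T z (g z)) = ‖s z‖ + RCLike.re (T z (g z - s z)) := by
      simp [T, map_sub, hφ_apply]
    have h_err : |RCLike.re (T z (g z - s z))| ≤ ‖g z - s z‖ :=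
      (RCLike.abs_re_le_norm _).trans
        ((T z).le_of_opNorm_le (hT_norm z) _ |>.trans_eq (one_mul _))
    have := norm_le_norm_add_norm_sub' (g z) (s z)
    linarith [neg_abs_le (RCLike.re (T z (g z - s z)))]
  refine ⟨T, hT_norm, ?_⟩
  calc ∫ z, ‖g z‖ ∂μ ≤ ∫ z, (RCLike.re (T z (g z)) + 2 * ‖g z - s z‖) ∂μ :=
        integral_mono hg.norm (hTg.re.add (hgs.norm.const_mul 2)) pointwise
    _ = RCLike.re (∫ z, T z (g z) ∂μ) + 2 * ∫ z, ‖g z - s z‖ ∂μ := by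
        rw [integral_add hTg.re (hgs.norm.const_mul 2), integral_const_mul, integral_re hTg]
    _ ≤ ‖∫ z, T z (g z) ∂μ‖ + ε := by
        linarith [RCLike.re_le_norm (∫ z, T z (g z) ∂μ)]

end NormingFunctionals

section Holomorphic

variable {X Y : Type*} [NormedAddCommGroup X] [NormedSpace ℂ X] [CompleteSpace X]
  [NormedAddCommGroup Y] [NormedSpace ℂ Y]

lemma differentiable_integral_clm_apply_comp_mul {f : ℂ → X}
    (hf : Differentiable ℂ f) (μ : Measure Circle) [IsFiniteMeasure μ]
    {T : Circle → X →L[ℂ] Y} (hT : StronglyMeasurable T) {C : ℝ} (hTC : ∀ z, ‖T z‖ ≤ C) :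
    Differentiable ℂ fun ζ => ∫ z, T z (f (ζ * z)) ∂μ := by
  have integrable : ∀ {G : Circle → X}, Continuous G → Integrable (fun z => T z (G z)) μ := by
    intro G hG
    obtain ⟨K, hK⟩ := isCompact_univ.exists_bound_of_continuousOn hG.continuousOn
    refine .of_bound (isBoundedBilinearMap_apply.continuous.comp_aestronglyMeasurable₂
      hT.aestronglyMeasurable hG.aestronglyMeasurable) (C * K) (ae_of_all _ fun z => ?_)
    exact (T z).le_of_opNorm_le_of_le (hTC z) (hK z trivial)
  have hasDerivAt : ∀ (z : Circle) ζ,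
      HasDerivAt (fun ζ => T z (f (ζ * z))) (T z ((z : ℂ) • deriv f (ζ * z))) ζ := fun z ζ =>
    (T z).hasFDerivAt.comp_hasDerivAt ζ ((hf _).hasDerivAt.scomp ζ (hasDerivAt_mul_const _))
  have hf_cont : Continuous f := hf.continuous
  have hf'_cont : Continuous (deriv f) := hf.deriv.continuous
  intro ζ₀
  obtain ⟨K, hK⟩ := (isCompact_closedBall (0 : ℂ) (‖ζ₀‖ + 1)).exists_bound_of_continuousOn
    hf'_cont.continuousOn
  have bound : ∀ z : Circle, ∀ ζ ∈ Metric.ball ζ₀ 1,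
      ‖T z ((z : ℂ) • deriv f (ζ * z))‖ ≤ C * K := by
    intro z ζ hζ
    refine (T z).le_of_opNorm_le_of_le (hTC z) ?_
    rw [norm_smul, Circle.norm_coe, one_mul]
    refine hK _ ?_
    rw [mem_closedBall_zero_iff, norm_mul, Circle.norm_coe, mul_one]
    exact (norm_le_norm_add_norm_sub' ζ ζ₀).trans (by linarith [mem_ball_iff_norm.1 hζ])
  exact (hasDerivAt_integral_of_dominated_loc_of_deriv_le (Metric.ball_mem_nhds ζ₀ one_pos)
    (.of_forall fun ζ => (integrable (by fun_prop)).aestronglyMeasurable)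
    (integrable (by fun_prop)) (integrable (by fun_prop)).aestronglyMeasurable
    (ae_of_all _ bound) (integrable_const _)
    (ae_of_all _ fun z ζ _ => hasDerivAt z ζ)).2.differentiableAt

end Holomorphic

lemma Complex.norm_le_of_forall_norm_eq_norm_le {E : Type*} [NormedAddCommGroup E]
    [NormedSpace ℂ E] {h : ℂ → E} (hh : Differentiable ℂ h) {c : ℂ} {R C : ℝ} (hc : ‖c‖ ≤ R)
    (hC : ∀ ζ, ‖ζ‖ = R → ‖h ζ‖ ≤ C) : ‖h c‖ ≤ C := by
  rcases hc.eq_or_lt with hc | hc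
  · exact hC c hc
  have hR : R ≠ 0 := ((norm_nonneg c).trans_lt hc).ne'
  refine Complex.norm_le_of_forall_mem_frontier_norm_le (U := Metric.ball 0 R)
    Metric.isBounded_ball hh.diffContOnCl (fun ζ hζ => hC ζ ?_) ?_
  · rwa [frontier_ball _ hR, mem_sphere_zero_iff_norm] at hζ
  · rw [closure_ball _ hR, mem_closedBall_zero_iff]
    exact hc.le

section Monotonicity

variable {X : Type*} [NormedAddCommGroup X] [NormedSpace ℂ X] [CompleteSpace X]
  (μ : Measure Circle) [IsFiniteMeasure μ] [μ.IsMulLeftInvariant]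

theorem integral_norm_comp_mul_le_of_norm_le {f : ℂ → X} (hf : Differentiable ℂ f) {c : ℂ}
    {R : ℝ} (hc : ‖c‖ ≤ R) :
    ∫ z : Circle, ‖f (c * z)‖ ∂μ ≤ ∫ z : Circle, ‖f (R * z)‖ ∂μ := by
  have hf_cont : Continuous f := hf.continuous
  have integrable : ∀ {g : Circle → ℝ}, Continuous g → Integrable g μ := fun hg =>
    hg.integrable_of_hasCompactSupport (.of_compactSpace _)
  refine le_of_forall_pos_le_add fun ε hε => ?_
  obtain ⟨T, hT_norm, hT⟩ := Integrable.exists_simpleFunc_dual_integral_norm_le (𝕜 := ℂ)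
    ((by fun_prop : Continuous fun z : Circle => f (c * z)).integrable_of_hasCompactSupport
      (.of_compactSpace _) (μ := μ)) hε
  have hmax : ‖∫ z, T z (f (c * z)) ∂μ‖ ≤ ∫ z : Circle, ‖f (R * z)‖ ∂μ := by
    refine Complex.norm_le_of_forall_norm_eq_norm_le
      (differentiable_integral_clm_apply_comp_mul hf μ T.stronglyMeasurable hT_norm) hc
      fun ζ hζ => ?_
    calc ‖∫ z, T z (f (ζ * z)) ∂μ‖ ≤ ∫ z, ‖f (ζ * z)‖ ∂μ :=
          norm_integral_le_of_norm_le (integrable (by fun_prop)) (ae_of_all _ fun z =>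
            (T z).le_of_opNorm_le (hT_norm z) _ |>.trans_eq (one_mul _))
      _ = ∫ z : Circle, ‖f (R * z)‖ ∂μ := by
          rw [integral_comp_mul_eq_comp_norm_mul μ (fun w => ‖f w‖), hζ]
  linarith

end Monotonicity

/-- For an entire function `f : ℂ → X` with values in a complex Banach space and
`0 ≤ R₁`, `0 ≤ R₂`, `R₁ + R₂ ≤ R`, one has
`∫_𝕋 ∫_𝕋 ‖f(R₁z₁ + R₂z₂)‖ dz₁ dz₂ ≤ ∫_𝕋 ‖f(Rz)‖ dz`. -/
theorem stmt0 {X : Type*} [NormedAddCommGroup X] [NormedSpace ℂ X] [CompleteSpace X]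
    (f : ℂ → X) (hf : Differentiable ℂ f)
    (R₁ R₂ R : ℝ) (h₁ : 0 ≤ R₁) (h₂ : 0 ≤ R₂) (hR : R₁ + R₂ ≤ R) :
    (∫ z₁ : Circle, ∫ z₂ : Circle,
        ‖f ((R₁ : ℂ) * (z₁ : ℂ) + (R₂ : ℂ) * (z₂ : ℂ))‖ ∂circleHaar ∂circleHaar)
      ≤ ∫ z : Circle, ‖f ((R : ℂ) * (z : ℂ))‖ ∂circleHaar := by
  have hf_cont : Continuous f := hf.continuous
  have rotate : ∀ z₁ : Circle, ∫ z₂ : Circle, ‖f (R₁ * z₁ + R₂ * z₂)‖ ∂circleHaar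
      = ∫ z₂ : Circle, ‖f ((R₁ + R₂ * z₂) * z₁)‖ ∂circleHaar := fun z₁ => by
    rw [← integral_mul_left_eq_self _ z₁]
    congr 1 with z₂
    rw [Circle.coe_mul]
    ring_nf
  have radius_le : ∀ z₂ : Circle, ‖(R₁ + R₂ * z₂ : ℂ)‖ ≤ R := fun z₂ =>
    calc ‖(R₁ + R₂ * z₂ : ℂ)‖ ≤ ‖(R₁ : ℂ)‖ + ‖(R₂ * z₂ : ℂ)‖ := norm_add_le _ _
      _ = R₁ + R₂ := by simp [abs_of_nonneg h₁, abs_of_nonneg h₂, Circle.norm_coe]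
      _ ≤ R := hR
  calc _ = ∫ z₂ : Circle, ∫ z₁ : Circle,
          ‖f ((R₁ + R₂ * z₂) * z₁)‖ ∂circleHaar ∂circleHaar := by
        simp_rw [rotate]
        exact integral_integral_swap_of_hasCompactSupport (by fun_prop) (.of_compactSpace _)
    _ ≤ ∫ _ : Circle, ∫ z : Circle, ‖f (R * z)‖ ∂circleHaar ∂circleHaar :=
        integral_mono_of_nonneg (ae_of_all _ fun _ => integral_nonneg fun _ => norm_nonneg _)
          (integrable_const _) (ae_of_all _ fun z₂ =>
            integral_norm_comp_mul_le_of_norm_le circleHaar hf (radius_le z₂))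
    _ = ∫ z : Circle, ‖f (R * z)‖ ∂circleHaar := by simp
end

section
/- Let X be a Banach space with cotype q (2 ≤ q < ∞), with cotype constant C_q(X), and let K be the constant in Kahane's inequality comparing the L¹ and L² norms of Steinhaus (circle-valued) random sums. Then for every m-linear map T : (ℂ^N)^m → X with coefficients a_{i₁,…,i_m} (i.e., T(z⁽¹⁾,…,z⁽ᵐ⁾) = Σ a_{i₁,…,i_m} z⁽¹⁾_{i₁} ⋯ z⁽ᵐ⁾_{i_m}), one has (Σ_{i₁,…,i_m=1}^N ‖a_{i₁,…,i_m}‖^q)^{1/q} ≤ (C_q(X) K)^m ∫_{𝕋^N} ⋯ ∫_{𝕋^N} ‖T(z⁽¹⁾,…,z⁽ᵐ⁾)‖ dz⁽¹⁾ ⋯ dz⁽ᵐ⁾. -/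
open MeasureTheory Filter Finset
open scoped BigOperators ENNReal NNReal Topology

instance inst_s3 : IsProbabilityMeasure circleHaar :=
  ⟨ENNReal.inv_mul_cancel (isOpen_univ.measure_pos Measure.haar Set.univ_nonempty).ne'
    isCompact_univ.measure_lt_top.ne⟩

instance (N : ℕ) : IsProbabilityMeasure (torusHaar N) := by
  rw [torusHaar]; infer_instance

theorem Continuous.integrable_of_compactSpace {α E : Type*} [TopologicalSpace α] [CompactSpace α]
    [MeasurableSpace α] [OpensMeasurableSpace α] [NormedAddCommGroup E]
    {μ : Measure α} [IsFiniteMeasure μ] {f : α → E} (hf : Continuous f) : Integrable f μ :=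
  hf.integrable_of_hasCompactSupport (HasCompactSupport.of_compactSpace f)

theorem Fintype.sum_fin_succ_pi {α M : Type*} [Fintype α] [AddCommMonoid M] {n : ℕ}
    (f : (Fin (n + 1) → α) → M) : ∑ i, f i = ∑ j, ∑ i' : Fin n → α, f (Fin.cons j i') :=
  (Fintype.sum_equiv (Fin.consEquiv fun _ => α) _ _ fun _ => rfl).symm.trans
    (Fintype.sum_prod_type _)

theorem integral_fin_succ_pi {E F : Type*} [MeasurableSpace E] [NormedAddCommGroup F]
    [NormedSpace ℝ F] (μ : Measure E) [SigmaFinite μ] {n : ℕ} {f : (Fin (n + 1) → E) → F}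
    (hf : Integrable f (Measure.pi fun _ => μ)) :
    ∫ x, f x ∂Measure.pi (fun _ => μ)
      = ∫ y, ∫ x, f (Fin.cons y x) ∂Measure.pi (fun _ => μ) ∂μ := by
  have e := (measurePreserving_piFinSuccAbove (fun _ : Fin (n + 1) => μ) 0).symm
  rw [← e.integral_comp', integral_prod]
  · simp [MeasurableEquiv.piFinSuccAbove_symm_apply, Fin.insertNthEquiv]
  · exact e.integrable_comp_emb (MeasurableEquiv.measurableEmbedding _) |>.mpr hf

section Lp

variable {ι : Type*} [Fintype ι] {q : ℝ}

theorem Lp_const_mul (hq : q ≠ 0) {c : ℝ} (hc : 0 ≤ c) {f : ι → ℝ} (hf : ∀ i, 0 ≤ f i) :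
    (∑ i, (c * f i) ^ q) ^ (1 / q) = c * (∑ i, f i ^ q) ^ (1 / q) := by
  simp_rw [Real.mul_rpow hc (hf _), ← Finset.mul_sum]
  rw [Real.mul_rpow (by positivity) (Finset.sum_nonneg fun i _ => by have := hf i; positivity),
    ← Real.rpow_mul hc, mul_one_div_cancel hq, Real.rpow_one]

theorem Lp_sum_sum_le_of_le {κ : Type*} [Fintype κ] (hq : 0 < q) {f : ι → κ → ℝ}
    (hf : ∀ i k, 0 ≤ f i k) {g : ι → ℝ} (hfg : ∀ i, (∑ k, f i k ^ q) ^ (1 / q) ≤ g i) :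
    (∑ i, ∑ k, f i k ^ q) ^ (1 / q) ≤ (∑ i, g i ^ q) ^ (1 / q) := by
  have hsum : ∀ i, 0 ≤ ∑ k, f i k ^ q := fun i =>
    Finset.sum_nonneg fun k _ => Real.rpow_nonneg (hf i k) q
  gcongr with i
  · exact Finset.sum_nonneg fun i _ => hsum i
  · have := hfg i
    rwa [one_div, Real.rpow_inv_le_iff_of_pos (hsum i)
      ((Real.rpow_nonneg (hsum i) _).trans this) hq] at this

theorem Lp_integral_le_integral_Lp {α : Type*} [MeasurableSpace α] {μ : Measure α}
    (hq : 1 ≤ q) {f : α → ι → ℝ} (hf : ∀ i, Integrable (fun x => f x i) μ)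
    (hf₀ : ∀ x i, 0 ≤ f x i) :
    (∑ i, (∫ x, f x i ∂μ) ^ q) ^ (1 / q) ≤ ∫ x, (∑ i, f x i ^ q) ^ (1 / q) ∂μ := by
  have hq₀ : 0 < q := zero_lt_one.trans_le hq
  set p : ℝ≥0∞ := ENNReal.ofReal q
  have : Fact (1 ≤ p) := ⟨ENNReal.one_le_ofReal.mpr hq⟩
  have hp : p.toReal = q := ENNReal.toReal_ofReal hq₀.le
  have norm_eq : ∀ v : ι → ℝ, (∀ i, 0 ≤ v i) →
      ‖WithLp.toLp p v‖ = (∑ i, v i ^ q) ^ (1 / q) := by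
    intro v hv
    rw [PiLp.norm_eq_sum (hp ▸ hq₀), hp]
    simp [Real.norm_eq_abs, abs_of_nonneg (hv _)]
  calc (∑ i, (∫ x, f x i ∂μ) ^ q) ^ (1 / q)
      = ‖∫ x, WithLp.toLp p (f x) ∂μ‖ := by
        rw [← norm_eq _ fun i => integral_nonneg (hf₀ · i)]
        congr 2
        ext i
        exact (eval_integral_piLp (f := fun x => WithLp.toLp p (f x)) hf i).symm
    _ ≤ ∫ x, ‖WithLp.toLp p (f x)‖ ∂μ := norm_integral_le_integral_norm _
    _ = ∫ x, (∑ i, f x i ^ q) ^ (1 / q) ∂μ := by simp_rw [norm_eq _ (hf₀ _)]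

end Lp

section Steinhaus

variable {X : Type*} [NormedAddCommGroup X] [NormedSpace ℂ X]

def steinhausSum {ι : Type*} [Fintype ι] (x : ι → X) (z : ι → Circle) : X :=
  ∑ k, (z k : ℂ) • x k

/-- The `m`-linear form `T(z⁽¹⁾, …, z⁽ᵐ⁾)` with coefficients `a`, evaluated on points of `𝕋^N`. -/
def multiSteinhausSum {m N : ℕ} (a : (Fin m → Fin N) → X) (zs : Fin m → Fin N → Circle) : X :=
  ∑ i : Fin m → Fin N, (∏ k, (zs k (i k) : ℂ)) • a i

theorem continuous_steinhausSum {ι : Type*} [Fintype ι] (x : ι → X) :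
    Continuous (steinhausSum x) := by
  unfold steinhausSum; fun_prop

theorem continuous_multiSteinhausSum {m N : ℕ} (a : (Fin m → Fin N) → X) :
    Continuous (multiSteinhausSum a) := by
  unfold multiSteinhausSum; fun_prop

theorem multiSteinhausSum_cons {m N : ℕ} (a : (Fin (m + 1) → Fin N) → X) (z : Fin N → Circle)
    (zs : Fin m → Fin N → Circle) :
    multiSteinhausSum a (Fin.cons z zs)
      = multiSteinhausSum (fun i => steinhausSum (fun j => a (Fin.cons j i)) z) zs := by
  simp only [multiSteinhausSum, steinhausSum, Fintype.sum_fin_succ_pi, Fin.prod_univ_succ,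
    Fin.cons_zero, Fin.cons_succ, Finset.smul_sum, smul_smul, mul_comm]
  exact Finset.sum_comm

theorem multiSteinhausSum_fin_zero {N : ℕ} (a : (Fin 0 → Fin N) → X)
    (zs : Fin 0 → Fin N → Circle) : multiSteinhausSum a zs = a default := by
  simp [multiSteinhausSum]

theorem lq_le_pow_mul_integral_multiSteinhausSum {q D : ℝ} (hq : 1 ≤ q) (hD : 0 ≤ D) {N : ℕ}
    (h : ∀ x : Fin N → X,
      (∑ k, ‖x k‖ ^ q) ^ (1 / q) ≤ D * ∫ z, ‖steinhausSum x z‖ ∂torusHaar N)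
    (m : ℕ) (a : (Fin m → Fin N) → X) :
    (∑ i, ‖a i‖ ^ q) ^ (1 / q)
      ≤ D ^ m * ∫ zs, ‖multiSteinhausSum a zs‖ ∂Measure.pi fun _ => torusHaar N := by
  have hq₀ : 0 < q := zero_lt_one.trans_le hq
  induction m with
  | zero =>
    simp [multiSteinhausSum_fin_zero, ← Real.rpow_mul (norm_nonneg _), hq₀.ne']
  | succ m ih =>
    set f : (Fin N → Circle) → (Fin m → Fin N) → ℝ :=
      fun z i => ‖steinhausSum (fun j => a (Fin.cons j i)) z‖
    have hf_cont : ∀ i, Continuous (f · i) := fun i => (continuous_steinhausSum _).norm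
    have hT_int : Integrable (fun zs => ‖multiSteinhausSum a zs‖)
        (Measure.pi fun _ => torusHaar N) :=
      (continuous_multiSteinhausSum a).norm.integrable_of_compactSpace
    calc (∑ i, ‖a i‖ ^ q) ^ (1 / q)
        = (∑ i : Fin m → Fin N, ∑ j, ‖a (Fin.cons j i)‖ ^ q) ^ (1 / q) := by
          rw [Fintype.sum_fin_succ_pi, Finset.sum_comm]
      _ ≤ (∑ i, (D * ∫ z, f z i ∂torusHaar N) ^ q) ^ (1 / q) :=
          Lp_sum_sum_le_of_le hq₀ (fun _ _ => norm_nonneg _) fun i => h _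
      _ = D * (∑ i, (∫ z, f z i ∂torusHaar N) ^ q) ^ (1 / q) :=
          Lp_const_mul hq₀.ne' hD fun i => integral_nonneg fun _ => norm_nonneg _
      _ ≤ D * ∫ z, (∑ i, f z i ^ q) ^ (1 / q) ∂torusHaar N := by
          gcongr
          exact Lp_integral_le_integral_Lp hq (fun i => (hf_cont i).integrable_of_compactSpace)
            fun _ _ => norm_nonneg _
      _ ≤ D * ∫ z, D ^ m * ∫ zs, ‖multiSteinhausSum a (Fin.cons z zs)‖
            ∂(Measure.pi fun _ => torusHaar N) ∂torusHaar N := by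
          refine mul_le_mul_of_nonneg_left ?_ hD
          refine integral_mono_of_nonneg (ae_of_all _ fun _ => by positivity) ?_
            (ae_of_all _ fun z => ?_)
          · exact (((continuous_multiSteinhausSum a).comp
              (continuous_fst.finCons continuous_snd)).norm.integrable_of_compactSpace
              |>.integral_prod_left).const_mul _
          simpa only [multiSteinhausSum_cons] using ih _
      _ = D ^ (m + 1) * ∫ zs, ‖multiSteinhausSum a zs‖ ∂Measure.pi fun _ => torusHaar N := by
          rw [integral_fin_succ_pi _ hT_int, integral_const_mul, pow_succ]
          ring

noncomputable def steinhausL2 {N : ℕ} (x : Fin N → X) : ℝ :=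
  (∫ z, ‖steinhausSum x z‖ ^ (2 : ℝ) ∂torusHaar N) ^ (1 / (2 : ℝ))

variable (X) in
/-- Cotype `q` with constant `C`, measured with Steinhaus (rather than Rademacher) averages. -/
def HasSteinhausCotype (q C : ℝ) : Prop :=
  ∀ (N : ℕ) (x : Fin N → X), (∑ k, ‖x k‖ ^ q) ^ (1 / q) ≤ C * steinhausL2 x

variable (X) in
def HasKahaneConstant (K : ℝ) : Prop :=
  ∀ (N : ℕ) (x : Fin N → X), steinhausL2 x ≤ K * ∫ z, ‖steinhausSum x z‖ ∂torusHaar N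

theorem steinhausSum_const_fin_one (x : X) (z : Fin 1 → Circle) :
    ‖steinhausSum (fun _ => x) z‖ = ‖x‖ := by
  simp [steinhausSum, norm_smul, Circle.norm_coe]

theorem steinhausL2_const_fin_one (x : X) : steinhausL2 (fun _ : Fin 1 => x) = ‖x‖ := by
  simp only [steinhausL2, steinhausSum_const_fin_one, integral_const, probReal_univ, one_smul]
  rw [← Real.rpow_mul (norm_nonneg x)]
  norm_num

theorem HasSteinhausCotype.pos [Nontrivial X] {q C : ℝ} (h : HasSteinhausCotype X q C) :
    0 < C := by
  obtain ⟨x, hx⟩ := exists_ne (0 : X)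
  have hx₀ : 0 < ‖x‖ := norm_pos_iff.mpr hx
  have := h 1 fun _ => x
  simp only [Fin.sum_univ_one, steinhausL2_const_fin_one] at this
  exact pos_of_mul_pos_left ((by positivity : (0 : ℝ) < _).trans_le this) hx₀.le

theorem HasKahaneConstant.one_le [Nontrivial X] {K : ℝ} (h : HasKahaneConstant X K) : 1 ≤ K := by
  obtain ⟨x, hx⟩ := exists_ne (0 : X)
  have := h 1 fun _ => x
  simp only [steinhausL2_const_fin_one, steinhausSum_const_fin_one, integral_const,
    probReal_univ, one_smul] at this
  exact (le_mul_iff_one_le_left (norm_pos_iff.mpr hx)).mp this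

theorem HasSteinhausCotype.lq_le_mul_integral {q C K : ℝ} (hC : HasSteinhausCotype X q C)
    (hK : HasKahaneConstant X K) (hC₀ : 0 ≤ C) {N : ℕ} (x : Fin N → X) :
    (∑ k, ‖x k‖ ^ q) ^ (1 / q) ≤ C * K * ∫ z, ‖steinhausSum x z‖ ∂torusHaar N := by
  rw [mul_assoc]
  exact (hC N x).trans (mul_le_mul_of_nonneg_left (hK N x) hC₀)

end Steinhaus

theorem stmt3_general {X : Type*} [NormedAddCommGroup X] [NormedSpace ℂ X]
    (q : ℝ) (hq : 2 ≤ q) (Cq K : ℝ)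
    (hcot : ∀ (N : ℕ) (x : Fin N → X),
      (∑ k, ‖x k‖ ^ q) ^ (1 / q)
        ≤ Cq * (∫ z : Fin N → Circle,
            ‖∑ k, (z k : ℂ) • x k‖ ^ (2 : ℝ) ∂torusHaar N) ^ (1 / (2 : ℝ)))
    (hK : ∀ (N : ℕ) (x : Fin N → X),
      (∫ z : Fin N → Circle, ‖∑ k, (z k : ℂ) • x k‖ ^ (2 : ℝ) ∂torusHaar N) ^ (1 / (2 : ℝ))
        ≤ K * ∫ z : Fin N → Circle, ‖∑ k, (z k : ℂ) • x k‖ ∂torusHaar N)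
    (N m : ℕ) (a : (Fin m → Fin N) → X) :
    (∑ i : Fin m → Fin N, ‖a i‖ ^ q) ^ (1 / q)
      ≤ (Cq * K) ^ m *
          ∫ zs : Fin m → Fin N → Circle,
            ‖∑ i : Fin m → Fin N, (∏ k : Fin m, (zs k (i k) : ℂ)) • a i‖
              ∂(Measure.pi fun _ => torusHaar N) := by
  have hq₁ : 1 ≤ q := one_le_two.trans hq
  rcases subsingleton_or_nontrivial X with hX | hX
  · simp [Subsingleton.elim _ (0 : X), (zero_lt_one.trans_le hq₁).ne']
  have hCotype : HasSteinhausCotype X q Cq := hcot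
  have hKahane : HasKahaneConstant X K := hK
  exact lq_le_pow_mul_integral_multiSteinhausSum hq₁
    (mul_nonneg hCotype.pos.le (zero_le_one.trans hKahane.one_le))
    (hCotype.lq_le_mul_integral hKahane hCotype.pos.le) m a

/-- If `X` has cotype `q` with constant `Cq` (w.r.t. Steinhaus variables) and `K` is
the Kahane `L¹`–`L²` constant for Steinhaus sums, then for every `m`-linear map
`T : (ℂ^N)^m → X` with coefficients `a`,
`(Σ ‖a_{i₁,…,i_m}‖^q)^{1/q} ≤ (Cq K)^m ∫_{𝕋^N}⋯∫_{𝕋^N} ‖T(z⁽¹⁾,…,z⁽ᵐ⁾)‖ dz⁽¹⁾⋯dz⁽ᵐ⁾`. -/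
theorem stmt3 {X : Type*} [NormedAddCommGroup X] [NormedSpace ℂ X]
    (q : ℝ) (hq : 2 ≤ q) (Cq K : ℝ)
    (hcot : ∀ (N : ℕ) (x : Fin N → X),
      (∑ k, ‖x k‖ ^ q) ^ (1 / q)
        ≤ Cq * (∫ z : Fin N → Circle,
            ‖∑ k, (z k : ℂ) • x k‖ ^ (2 : ℝ) ∂torusHaar N) ^ (1 / (2 : ℝ)))
    (hK : ∀ (N : ℕ) (x : Fin N → X),
      (∫ z : Fin N → Circle, ‖∑ k, (z k : ℂ) • x k‖ ^ (2 : ℝ) ∂torusHaar N) ^ (1 / (2 : ℝ))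
        ≤ K * ∫ z : Fin N → Circle, ‖∑ k, (z k : ℂ) • x k‖ ∂torusHaar N)
    (N m : ℕ) (hm : 1 ≤ m) (a : (Fin m → Fin N) → X) :
    (∑ i : Fin m → Fin N, ‖a i‖ ^ q) ^ (1 / q)
      ≤ (Cq * K) ^ m *
          ∫ zs : Fin m → Fin N → Circle,
            ‖∑ i : Fin m → Fin N, (∏ k : Fin m, (zs k (i k) : ℂ)) • a i‖
              ∂(Measure.pi fun _ => torusHaar N) :=
  stmt3_general q hq Cq K hcot hK N m a
end
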